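/- For every integer k ≥ 1, the radio number of the middle graph M(P_{2k}) of the path P_{2k} equals 4k² − 1, and for every integer k ≥ 1, the radio number of the middle graph M(P_{2k+1}) of the path P_{2k+1} equals 4k(k+1). -/

import Mathlib

/-- The middle graph `M(P n)` of the path `P n`: vertices are
`v 1, …, v n` (encoded as even indices `0, 2, …, 2n-2`) together with
`v' 1, …, v' (n-1)` (encoded as odd indices `1, 3, …, 2n-3`), where
`v' i` corresponds to the edge `e i = v i v (i+1)`.  Two vertices are
adjacent iff their indices differ by `1` (i.e. `v' i` is adjacent to
`v i` and `v (i+1)`), or they are both odd and differ by `2`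
(i.e. `v' i` is adjacent to `v' (i+1)`). -/
def middlePath (n : ℕ) : SimpleGraph (Fin (2 * n - 1)) where
  Adj a b := ((a : ℕ) + 1 = (b : ℕ) ∨ (b : ℕ) + 1 = (a : ℕ)) ∨
    ((a : ℕ) % 2 = 1 ∧ (b : ℕ) % 2 = 1 ∧
      ((a : ℕ) + 2 = (b : ℕ) ∨ (b : ℕ) + 2 = (a : ℕ)))
  symm := by constructor; intro a b h; tauto
  loopless := by constructor; intro a h; rcases h with (h | h) | ⟨-, -, h | h⟩ <;> omega

/-- `φ` is a radio labeling of `G`: distinct vertices `u, v` satisfy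
`|φ u - φ v| ≥ diam G + 1 - d(u, v)`. -/
def IsRadioLabeling {V : Type*} (G : SimpleGraph V) (φ : V → ℕ) : Prop :=
  ∀ u v : V, u ≠ v → (G.diam : ℤ) + 1 ≤ (G.dist u v : ℤ) + |(φ u : ℤ) - (φ v : ℤ)|

/-- The span of a labeling `φ`: the maximum of `|φ u - φ v|` over all pairs. -/
def labelSpan {V : Type*} [Fintype V] (φ : V → ℕ) : ℕ :=
  Finset.univ.sup fun p : V × V => ((φ p.1 : ℤ) - (φ p.2 : ℤ)).natAbs

/-- The radio number of `G`: the minimum span over all radio labelings. -/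
noncomputable def radioNumber {V : Type*} [Fintype V] (G : SimpleGraph V) : ℕ :=
  sInf {s | ∃ φ : V → ℕ, IsRadioLabeling G φ ∧ labelSpan φ = s}

/-! Sort the vertices by label, `x₀, x₁, …, x_{N-1}`. The radio condition for consecutive
vertices gives `φ x_{p+1} - φ x_p ≥ diam + 1 - d(x_p, x_{p+1})`, so the span is at least
`(N - 1)(diam + 1) - ∑ d(x_p, x_{p+1})`. For `M(P_n)` (diameter `n`, `N = 2n - 1`) take the weight
`w` = twice the distance to the centre, one less for odd `n`: then `2 d(u, v) ≤ w u + w v`,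
`∑ w = n²`, and the sum of consecutive distances is at most `n² - 1`, so the span is at least
`n² - 1`. Conversely, visiting the centre first and then alternating between the two halves of
the path makes every one of these inequalities tight, and labelling greedily along this order is a
radio labeling: two consecutive increments already add up to at least the diameter. -/

theorem sum_range_add_succ_add {M : Type*} [AddCommMonoid M] (f : ℕ → M) (N : ℕ) :
    ∑ p ∈ Finset.range N, (f p + f (p + 1)) + (f 0 + f N) =
      ∑ p ∈ Finset.range (N + 1), f p + ∑ p ∈ Finset.range (N + 1), f p := by
  rw [Finset.sum_add_distrib]
  nth_rw 1 [Finset.sum_range_succ]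
  rw [Finset.sum_range_succ']
  abel

theorem mul_add_le_sum_range_add {f g : ℕ → ℕ} {a N : ℕ}
    (h : ∀ p < N, a + f p ≤ g p + f (p + 1)) :
    N * a + f 0 ≤ ∑ p ∈ Finset.range N, g p + f N := by
  induction N with
  | zero => simp
  | succ N ih =>
    have := ih fun p hp => h p (by omega)
    have := h N (by omega)
    rw [Finset.sum_range_succ, Nat.succ_mul]
    omega

section Enumeration

variable {V : Type*} [Fintype V]

theorem exists_bijOn_monotoneOn [Nonempty V] {α : Type*} [LinearOrder α]
    (φ : V → α) :
    ∃ x : ℕ → V, Set.BijOn x (Set.Iio (Fintype.card V)) Set.univ ∧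
      MonotoneOn (φ ∘ x) (Set.Iio (Fintype.card V)) := by
  set N := Fintype.card V
  have : NeZero N := ⟨Fintype.card_ne_zero⟩
  let e := (Fintype.equivFin V).symm
  let σ := Tuple.sort (φ ∘ e)
  have hval : ∀ p ∈ Set.Iio N, (Fin.ofNat N p : ℕ) = p := fun p hp => Nat.mod_eq_of_lt hp
  refine ⟨fun p => e (σ (Fin.ofNat N p)), ⟨fun _ _ => trivial, ?_, ?_⟩, ?_⟩
  · intro p hp q hq h
    rw [← hval p hp, ← hval q hq, (e.injective.comp σ.injective) h]
  · intro v _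
    refine ⟨σ.symm (e.symm v), (σ.symm (e.symm v)).isLt, ?_⟩
    show e (σ (Fin.ofNat N _)) = v
    rw [show Fin.ofNat N _ = σ.symm (e.symm v) from Fin.ext (hval _ (σ.symm (e.symm v)).isLt)]
    simp
  · intro p hp q hq hpq
    exact Tuple.monotone_sort (φ ∘ e) (Fin.le_def.2 (by rw [hval p hp, hval q hq]; exact hpq))

theorem Set.BijOn.sum_range_comp {M : Type*} [AddCommMonoid M] {N : ℕ} {x : ℕ → V}
    (hx : Set.BijOn x (Set.Iio N) Set.univ) (f : V → M) :
    ∑ p ∈ Finset.range N, f (x p) = ∑ v, f v :=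
  Finset.sum_nbij x (fun _ _ => Finset.mem_univ _) (by simpa using hx.injOn)
    (by simpa using hx.surjOn) fun _ _ => rfl

end Enumeration

section RadioLabeling

variable {V : Type*}

theorem natAbs_sub_le_labelSpan [Fintype V] (φ : V → ℕ) (u v : V) :
    ((φ u : ℤ) - φ v).natAbs ≤ labelSpan φ :=
  Finset.le_sup (f := fun p : V × V => ((φ p.1 : ℤ) - φ p.2).natAbs) (Finset.mem_univ (u, v))

theorem labelSpan_le_of_forall_le [Fintype V] {φ : V → ℕ} {s : ℕ} (h : ∀ v, φ v ≤ s) :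
    labelSpan φ ≤ s :=
  Finset.sup_le fun p _ => by have := h p.1; have := h p.2; omega

theorem radioNumber_eq_of_isRadioLabeling [Fintype V] {G : SimpleGraph V} {s : ℕ}
    {φ : V → ℕ} (hφ : IsRadioLabeling G φ) (hspan : labelSpan φ ≤ s)
    (hlower : ∀ ψ, IsRadioLabeling G ψ → s ≤ labelSpan ψ) : radioNumber G = s :=
  have hφ' : labelSpan φ ∈ {t | ∃ ψ, IsRadioLabeling G ψ ∧ labelSpan ψ = t} :=
    ⟨φ, hφ, rfl⟩
  le_antisymm ((Nat.sInf_le hφ').trans hspan)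
    (le_csInf ⟨_, hφ'⟩ (by rintro _ ⟨ψ, hψ, rfl⟩; exact hlower ψ hψ))

theorem IsRadioLabeling.card_sub_one_mul_le [Fintype V] [Nontrivial V] {G : SimpleGraph V}
    {φ : V → ℕ} (hφ : IsRadioLabeling G φ) (w : V → ℕ)
    (hdist : ∀ u v, 2 * G.dist u v ≤ w u + w v)
    (hpair : ∀ u v, u ≠ v → 2 ≤ w u + w v) :
    (Fintype.card V - 1) * (G.diam + 1) + 1 ≤ labelSpan φ + ∑ v, w v := by
  obtain ⟨x, hbij, hmono⟩ := exists_bijOn_monotoneOn φ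
  obtain ⟨N, hN⟩ : ∃ N, Fintype.card V = N + 1 :=
    ⟨_, (Nat.succ_pred_eq_of_pos Fintype.card_pos).symm⟩
  have hN1 : 1 ≤ N := by have := Fintype.one_lt_card (α := V); omega
  rw [hN] at hbij hmono
  rw [hN, Nat.add_sub_cancel]
  have hIio : ∀ p ≤ N, p ∈ Set.Iio (N + 1) := fun p hp => Set.mem_Iio.2 (by omega)
  have hne : ∀ p q, p ≤ N → q ≤ N → p ≠ q → x p ≠ x q := fun p q hp hq hpq h =>
    hpq (hbij.injOn (hIio p hp) (hIio q hq) h)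
  have hstep : ∀ p < N, G.diam + 1 + φ (x p) ≤ G.dist (x p) (x (p + 1)) + φ (x (p + 1)) := by
    intro p hp
    have hle : φ (x p) ≤ φ (x (p + 1)) :=
      hmono (hIio p (by omega)) (hIio (p + 1) (by omega)) (by omega)
    have := hφ (x p) (x (p + 1)) (hne _ _ (by omega) (by omega) (by omega))
    rw [abs_sub_comm, abs_of_nonneg (by omega)] at this
    omega
  have hspan : φ (x N) ≤ φ (x 0) + labelSpan φ := by
    have := natAbs_sub_le_labelSpan φ (x N) (x 0)
    omega
  have hweight : 2 * ∑ p ∈ Finset.range N, G.dist (x p) (x (p + 1)) + 2 ≤ 2 * ∑ v, w v := by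
    rw [← hbij.sum_range_comp w, two_mul (∑ p ∈ Finset.range (N + 1), w (x p)),
      ← sum_range_add_succ_add, Finset.mul_sum]
    gcongr with p hp
    · exact hdist _ _
    · exact hpair _ _ (hne _ _ (by omega) le_rfl (by omega))
  have := mul_add_le_sum_range_add hstep
  omega

theorem isRadioLabeling_comp_of_monotone {G : SimpleGraph V} (hG : G.Connected)
    {pos : V → ℕ} (hpos : Function.Injective pos) {f : ℕ → ℕ} (hf : Monotone f)
    (hnext : ∀ u v, pos v = pos u + 1 → G.diam + 1 + f (pos u) ≤ G.dist u v + f (pos v))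
    (htwo : ∀ p, f p + G.diam ≤ f (p + 2)) :
    IsRadioLabeling G (f ∘ pos) := by
  have key : ∀ u v, pos u < pos v →
      (G.diam : ℤ) + 1 ≤ G.dist u v + |(f (pos u) : ℤ) - f (pos v)| := by
    intro u v huv
    have hle : f (pos u) ≤ f (pos v) := hf huv.le
    rw [abs_sub_comm, abs_of_nonneg (by omega)]
    rcases Nat.lt_or_ge (pos u + 1) (pos v) with hfar | hnear
    · have := htwo (pos u)
      have := hf (show pos u + 2 ≤ pos v by omega)
      have := hG.pos_dist_of_ne (show u ≠ v by rintro rfl; omega)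
      omega
    · have := hnext u v (by omega)
      omega
  intro u v huv
  rcases lt_or_gt_of_ne (hpos.ne huv) with h | h
  · exact key u v h
  · rw [SimpleGraph.dist_comm, abs_sub_comm]
    exact key v u h

end RadioLabeling

def middleDist (a b : ℕ) : ℕ :=
  if a = b then 0 else (a - b + (b - a) + 1) / 2 + if a % 2 = 0 ∧ b % 2 = 0 then 1 else 0

theorem middleDist_comm (a b : ℕ) : middleDist a b = middleDist b a := by
  unfold middleDist; split_ifs <;> omega

theorem middleDist_le {n a b : ℕ} (ha : a < 2 * n - 1) (hb : b < 2 * n - 1) :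
    middleDist a b ≤ n := by
  unfold middleDist; split_ifs <;> omega

section MiddlePath

variable {n : ℕ}

theorem middleDist_le_length {a b : Fin (2 * n - 1)} (w : (middlePath n).Walk a b) :
    middleDist a b ≤ w.length := by
  induction w with
  | nil => simp [middleDist]
  | @cons u v b hadj w ih =>
    rw [SimpleGraph.Walk.length_cons]
    change ((u : ℕ) + 1 = v ∨ (v : ℕ) + 1 = u) ∨
      ((u : ℕ) % 2 = 1 ∧ (v : ℕ) % 2 = 1 ∧ ((u : ℕ) + 2 = v ∨ (v : ℕ) + 2 = u))
      at hadj
    unfold middleDist at ih ⊢; split_ifs at ih ⊢ <;> omega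

theorem exists_walk_length_eq_middleDist (a b : Fin (2 * n - 1)) (hab : (a : ℕ) ≤ b) :
    ∃ w : (middlePath n).Walk a b, w.length = middleDist a b := by
  obtain ⟨d, hd⟩ : ∃ d, (b : ℕ) - a = d := ⟨_, rfl⟩
  induction d using Nat.strong_induction_on generalizing a with
  | _ d ih =>
    rcases Nat.eq_zero_or_pos d with rfl | hd1
    · obtain rfl : a = b := Fin.ext (by omega)
      exact ⟨.nil, by simp [middleDist]⟩
    -- step to `a + 1`, or from an edge vertex straight to the next edge vertex `a + 2`
    obtain ⟨s, hs⟩ : ∃ s, (((a : ℕ) % 2 = 0 ∨ d = 1) ∧ s = 1) ∨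
        ((a : ℕ) % 2 = 1 ∧ 2 ≤ d ∧ s = 2) :=
      ⟨if (a : ℕ) % 2 = 0 ∨ d = 1 then 1 else 2, by split_ifs <;> omega⟩
    let a' : Fin (2 * n - 1) := ⟨a + s, by have := b.isLt; omega⟩
    have hadj : (middlePath n).Adj a a' := by
      show ((a : ℕ) + 1 = a + s ∨ a + s + 1 = a) ∨
        ((a : ℕ) % 2 = 1 ∧ (a + s) % 2 = 1 ∧ ((a : ℕ) + 2 = a + s ∨ a + s + 2 = a))
      omega
    obtain ⟨w, hw⟩ := ih (d - s) (by omega) a' (by show (a : ℕ) + s ≤ b; omega)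
      (by show (b : ℕ) - (a + s) = d - s; omega)
    refine ⟨.cons hadj w, ?_⟩
    rw [SimpleGraph.Walk.length_cons, hw]
    show middleDist (a + s) b + 1 = middleDist a b
    unfold middleDist; split_ifs <;> omega

theorem middlePath_dist (a b : Fin (2 * n - 1)) : (middlePath n).dist a b = middleDist a b := by
  wlog hab : (a : ℕ) ≤ b generalizing a b
  · rw [SimpleGraph.dist_comm, middleDist_comm]
    exact this b a (by omega)
  obtain ⟨w, hw⟩ := exists_walk_length_eq_middleDist a b hab
  obtain ⟨w', hw'⟩ := SimpleGraph.Reachable.exists_walk_length_eq_dist ⟨w⟩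
  exact le_antisymm (hw ▸ SimpleGraph.dist_le w) (hw' ▸ middleDist_le_length w')

theorem middlePath_connected (hn : 1 ≤ n) : (middlePath n).Connected := by
  rw [SimpleGraph.connected_iff]
  refine ⟨fun a b => ?_, ⟨⟨0, by omega⟩⟩⟩
  rcases le_total (a : ℕ) b with hab | hba
  · exact ⟨(exists_walk_length_eq_middleDist a b hab).choose⟩
  · exact ⟨(exists_walk_length_eq_middleDist b a hba).choose.reverse⟩

theorem middlePath_diam (hn : 2 ≤ n) : (middlePath n).diam = n := by
  have hconn := middlePath_connected (by omega : 1 ≤ n)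
  have := hconn.nonempty
  apply le_antisymm
  · obtain ⟨u, v, huv⟩ := (middlePath n).exists_dist_eq_diam
    rw [← huv, middlePath_dist]
    exact middleDist_le u.isLt v.isLt
  · have := SimpleGraph.dist_le_diam (SimpleGraph.connected_iff_ediam_ne_top.1 hconn)
      (u := ⟨0, by omega⟩) (v := ⟨2 * n - 2, by omega⟩)
    rw [middlePath_dist] at this
    change middleDist 0 (2 * n - 2) ≤ _ at this
    unfold middleDist at this; split_ifs at this <;> omega

end MiddlePath

/-- Twice the distance to the centre `n - 1`; for odd `n` one less, but `1` at the centre. -/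
def middleWeight (n v : ℕ) : ℕ :=
  if n % 2 = 0 then 2 * ((v - (n - 1) + (n - 1 - v) + 1) / 2)
  else 2 * ((v - (n - 1) + (n - 1 - v)) / 2) + 1

theorem two_mul_middleDist_le {n : ℕ} (hn : 1 ≤ n) (u v : ℕ) :
    2 * middleDist u v ≤ middleWeight n u + middleWeight n v := by
  unfold middleDist middleWeight; split_ifs <;> omega

theorem two_le_middleWeight_add {n u v : ℕ} (huv : u ≠ v) :
    2 ≤ middleWeight n u + middleWeight n v := by
  unfold middleWeight; split_ifs <;> omega

theorem sum_middleWeight (n : ℕ) :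
    ∑ v ∈ Finset.range (2 * n - 1), middleWeight n v = n ^ 2 := by
  induction n using Nat.strong_induction_on with
  | _ n ih =>
    match n with
    | 0 | 1 | 2 => decide
    | m + 3 =>
      -- `M(P (m + 3))` is `M(P (m + 1))` with two vertices added at each end
      have hshift : ∀ v, middleWeight (m + 3) (v + 2) = middleWeight (m + 1) v := by
        intro v; unfold middleWeight; split_ifs <;> omega
      have hends : middleWeight (m + 3) 0 + middleWeight (m + 3) 1 +
          middleWeight (m + 1) (2 * m + 1) + middleWeight (m + 1) (2 * m + 2) = 4 * m + 8 := by
        unfold middleWeight; split_ifs <;> omega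
      have hsq : (m + 3) ^ 2 = (m + 1) ^ 2 + (4 * m + 8) := by ring
      have := ih (m + 1) (by omega)
      rw [show 2 * (m + 1) - 1 = 2 * m + 1 by omega] at this
      rw [show 2 * (m + 3) - 1 = 2 * m + 1 + 2 + 1 + 1 by omega, Finset.sum_range_succ,
        Finset.sum_range_succ, Finset.sum_range_succ', Finset.sum_range_succ']
      simp only [hshift, this, Nat.zero_add]
      omega

theorem Nat.eq_zero_or_eq_two_mul_add_one_or_two (p : ℕ) :
    p = 0 ∨ (∃ i, p = 2 * i + 1) ∨ ∃ i, p = 2 * i + 2 := by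
  by_cases h0 : p = 0
  · exact Or.inl h0
  by_cases hp : p % 2 = 1
  · exact Or.inr (Or.inl ⟨p / 2, by omega⟩)
  · exact Or.inr (Or.inr ⟨p / 2 - 1, by omega⟩)

/-- Starting from the centre `n - 1`, alternate between the right half `n, n + 1, …` and the
left half `0, 1, …`. -/
def middleOrder (n p : ℕ) : ℕ :=
  if p = 0 then n - 1 else if p % 2 = 1 then n + p / 2 else p / 2 - 1

def middleIndex (n a : ℕ) : ℕ :=
  if a = n - 1 then 0 else if n ≤ a then 2 * (a - n) + 1 else 2 * a + 2

section MiddleOrder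

variable {n : ℕ}

theorem middleOrder_zero : middleOrder n 0 = n - 1 := rfl

theorem middleOrder_two_mul_add_one (i : ℕ) : middleOrder n (2 * i + 1) = n + i := by
  rw [middleOrder, if_neg (by omega), if_pos (by omega)]; omega

theorem middleOrder_two_mul_add_two (i : ℕ) : middleOrder n (2 * i + 2) = i := by
  rw [middleOrder, if_neg (by omega), if_neg (by omega)]; omega

theorem middleOrder_lt {p : ℕ} (hp : p < 2 * n - 1) : middleOrder n p < 2 * n - 1 := by
  unfold middleOrder; split_ifs <;> omega

theorem middleIndex_lt {a : ℕ} (ha : a < 2 * n - 1) : middleIndex n a < 2 * n - 1 := by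
  unfold middleIndex; split_ifs <;> omega

theorem middleOrder_middleIndex (a : ℕ) : middleOrder n (middleIndex n a) = a := by
  unfold middleIndex; split_ifs with h1 h2
  · exact h1.symm
  · rw [middleOrder_two_mul_add_one]; omega
  · rw [middleOrder_two_mul_add_two]

theorem middleIndex_middleOrder {p : ℕ} (hp : p < 2 * n - 1) :
    middleIndex n (middleOrder n p) = p := by
  obtain rfl | ⟨i, rfl⟩ | ⟨i, rfl⟩ := p.eq_zero_or_eq_two_mul_add_one_or_two
  · simp [middleOrder_zero, middleIndex]
  · rw [middleOrder_two_mul_add_one]; unfold middleIndex; split_ifs <;> omega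
  · rw [middleOrder_two_mul_add_two]; unfold middleIndex; split_ifs <;> omega

theorem middleDist_middleOrder_add_le (hn : 1 ≤ n) (p : ℕ) :
    middleDist (middleOrder n p) (middleOrder n (p + 1)) +
      middleDist (middleOrder n (p + 1)) (middleOrder n (p + 2)) ≤ n + 2 := by
  obtain rfl | ⟨i, rfl⟩ | ⟨i, rfl⟩ := p.eq_zero_or_eq_two_mul_add_one_or_two
  · rw [middleOrder_zero, middleOrder_two_mul_add_one 0, middleOrder_two_mul_add_two 0]
    unfold middleDist; split_ifs <;> omega
  · rw [middleOrder_two_mul_add_one, middleOrder_two_mul_add_two,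
      show 2 * i + 1 + 2 = 2 * (i + 1) + 1 by ring, middleOrder_two_mul_add_one]
    unfold middleDist; split_ifs <;> omega
  · rw [middleOrder_two_mul_add_two, show 2 * i + 2 + 1 = 2 * (i + 1) + 1 by ring,
      middleOrder_two_mul_add_one, show 2 * i + 2 + 2 = 2 * (i + 1) + 2 by ring,
      middleOrder_two_mul_add_two]
    unfold middleDist; split_ifs <;> omega

theorem two_mul_middleDist_middleOrder {p : ℕ} (hp : p + 1 < 2 * n - 1) :
    2 * middleDist (middleOrder n p) (middleOrder n (p + 1)) =
      middleWeight n (middleOrder n p) + middleWeight n (middleOrder n (p + 1)) := by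
  obtain rfl | ⟨i, rfl⟩ | ⟨i, rfl⟩ := p.eq_zero_or_eq_two_mul_add_one_or_two
  · rw [middleOrder_zero, middleOrder_two_mul_add_one 0]
    unfold middleDist middleWeight; split_ifs <;> omega
  · rw [middleOrder_two_mul_add_one, middleOrder_two_mul_add_two]
    unfold middleDist middleWeight; split_ifs <;> omega
  · rw [middleOrder_two_mul_add_two, show 2 * i + 2 + 1 = 2 * (i + 1) + 1 by ring,
      middleOrder_two_mul_add_one]
    unfold middleDist middleWeight; split_ifs <;> omega

end MiddleOrder

/-- Greedy labels along `middleOrder`: each step adds the least increment `n + 1 - d` that the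
radio condition allows. -/
def middleLabel (n p : ℕ) : ℕ :=
  ∑ q ∈ Finset.range p, (n + 1 - middleDist (middleOrder n q) (middleOrder n (q + 1)))

section MiddleLabel

variable {n : ℕ}

theorem middleLabel_succ (p : ℕ) : middleLabel n (p + 1) =
    middleLabel n p + (n + 1 - middleDist (middleOrder n p) (middleOrder n (p + 1))) :=
  Finset.sum_range_succ _ p

theorem middleLabel_monotone : Monotone (middleLabel n) :=
  monotone_nat_of_le_succ fun p => by rw [middleLabel_succ]; omega

theorem middleLabel_add_le_middleLabel_add_two (hn : 1 ≤ n) (p : ℕ) :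
    middleLabel n p + n ≤ middleLabel n (p + 2) := by
  have := middleDist_middleOrder_add_le hn p
  rw [show p + 2 = p + 1 + 1 from rfl] at this ⊢
  rw [middleLabel_succ, middleLabel_succ]
  omega

theorem sum_middleWeight_middleOrder :
    ∑ p ∈ Finset.range (2 * n - 1), middleWeight n (middleOrder n p) = n ^ 2 := by
  rw [← sum_middleWeight n]
  exact Finset.sum_nbij' (middleOrder n) (middleIndex n)
    (fun p hp => Finset.mem_range.2 (middleOrder_lt (Finset.mem_range.1 hp)))
    (fun a ha => Finset.mem_range.2 (middleIndex_lt (Finset.mem_range.1 ha)))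
    (fun p hp => middleIndex_middleOrder (Finset.mem_range.1 hp))
    (fun a _ => middleOrder_middleIndex a) fun _ _ => rfl

theorem sum_middleDist_middleOrder (hn : 2 ≤ n) :
    ∑ p ∈ Finset.range (2 * n - 2), middleDist (middleOrder n p) (middleOrder n (p + 1)) + 1 =
      n ^ 2 := by
  have hsum := sum_range_add_succ_add (fun p => middleWeight n (middleOrder n p)) (2 * n - 2)
  rw [show 2 * n - 2 + 1 = 2 * n - 1 by omega, sum_middleWeight_middleOrder] at hsum
  have hends :
      middleWeight n (middleOrder n 0) + middleWeight n (middleOrder n (2 * n - 2)) = 2 := by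
    rw [middleOrder_zero, show 2 * n - 2 = 2 * (n - 2) + 2 by omega, middleOrder_two_mul_add_two]
    unfold middleWeight; split_ifs <;> omega
  have htight : ∑ p ∈ Finset.range (2 * n - 2),
      (middleWeight n (middleOrder n p) + middleWeight n (middleOrder n (p + 1))) =
      2 * ∑ p ∈ Finset.range (2 * n - 2),
        middleDist (middleOrder n p) (middleOrder n (p + 1)) := by
    rw [Finset.mul_sum]
    exact Finset.sum_congr rfl fun p hp =>
      (two_mul_middleDist_middleOrder (by have := Finset.mem_range.1 hp; omega)).symm
  omega

theorem middleLabel_two_mul_sub_two (hn : 2 ≤ n) : middleLabel n (2 * n - 2) = n ^ 2 - 1 := by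
  have hle : ∀ q ∈ Finset.range (2 * n - 2),
      middleDist (middleOrder n q) (middleOrder n (q + 1)) ≤ n + 1 := fun q hq => by
    have := Finset.mem_range.1 hq
    have := middleDist_le (n := n) (middleOrder_lt (p := q) (by omega))
      (middleOrder_lt (p := q + 1) (by omega))
    omega
  rw [middleLabel, Finset.sum_tsub_distrib _ hle, Finset.sum_const, Finset.card_range, smul_eq_mul]
  have := sum_middleDist_middleOrder hn
  have hsq : (2 * n - 2) * (n + 1) + 2 = 2 * n ^ 2 := by
    obtain ⟨m, rfl⟩ : ∃ m, n = m + 1 := ⟨n - 1, by omega⟩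
    rw [show 2 * (m + 1) - 2 = 2 * m by omega]
    ring
  omega

end MiddleLabel

def middleLabeling (n : ℕ) (v : Fin (2 * n - 1)) : ℕ :=
  middleLabel n (middleIndex n v)

section RadioNumber

variable {n : ℕ}

theorem isRadioLabeling_middleLabeling (hn : 2 ≤ n) :
    IsRadioLabeling (middlePath n) (middleLabeling n) := by
  have hinv (v : Fin (2 * n - 1)) : middleOrder n (middleIndex n v) = v := middleOrder_middleIndex _
  show IsRadioLabeling _ (middleLabel n ∘ fun v : Fin (2 * n - 1) => middleIndex n v)
  refine isRadioLabeling_comp_of_monotone (middlePath_connected (by omega))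
    (fun u v h => Fin.ext (by rw [← hinv u, ← hinv v]; exact congrArg _ h))
    middleLabel_monotone (fun u v h => ?_) (fun p => ?_)
  · rw [middlePath_diam hn, middlePath_dist, h, middleLabel_succ, hinv u, ← h, hinv v]
    have := middleDist_le u.isLt v.isLt
    omega
  · rw [middlePath_diam hn]
    exact middleLabel_add_le_middleLabel_add_two (by omega) p

theorem labelSpan_middleLabeling_le (hn : 2 ≤ n) : labelSpan (middleLabeling n) ≤ n ^ 2 - 1 :=
  labelSpan_le_of_forall_le fun v =>
    (middleLabel_monotone (by have := middleIndex_lt (n := n) v.isLt; omega)).trans_eq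
      (middleLabel_two_mul_sub_two hn)

theorem le_labelSpan_of_isRadioLabeling_middlePath (hn : 2 ≤ n) {φ : Fin (2 * n - 1) → ℕ}
    (hφ : IsRadioLabeling (middlePath n) φ) : n ^ 2 - 1 ≤ labelSpan φ := by
  have : Nontrivial (Fin (2 * n - 1)) := Fin.nontrivial_iff_two_le.2 (by omega)
  have h := hφ.card_sub_one_mul_le (fun v => middleWeight n v)
    (fun u v => by rw [middlePath_dist]; exact two_mul_middleDist_le (by omega) u v)
    (fun u v huv => two_le_middleWeight_add (Fin.val_ne_of_ne huv))
  rw [Fintype.card_fin, middlePath_diam hn, Fin.sum_univ_eq_sum_range (fun v => middleWeight n v),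
    sum_middleWeight] at h
  have hsq : (2 * n - 1 - 1) * (n + 1) + 2 = 2 * n ^ 2 := by
    obtain ⟨m, rfl⟩ : ∃ m, n = m + 1 := ⟨n - 1, by omega⟩
    rw [show 2 * (m + 1) - 1 - 1 = 2 * m by omega]
    ring
  omega

theorem radioNumber_middlePath_eq (hn : 2 ≤ n) : radioNumber (middlePath n) = n ^ 2 - 1 :=
  radioNumber_eq_of_isRadioLabeling (isRadioLabeling_middleLabeling hn)
    (labelSpan_middleLabeling_le hn)
    fun _ hψ => le_labelSpan_of_isRadioLabeling_middlePath hn hψ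

end RadioNumber

/-- For every `k ≥ 1`, the radio number of the middle graph of the path `P (2k)`
is `4k² - 1`, and the radio number of the middle graph of `P (2k+1)` is `4k(k+1)`. -/
theorem radioNumber_middlePath (k : ℕ) (hk : 1 ≤ k) :
    radioNumber (middlePath (2 * k)) = 4 * k ^ 2 - 1 ∧
    radioNumber (middlePath (2 * k + 1)) = 4 * k * (k + 1) := by
  rw [radioNumber_middlePath_eq (by omega), radioNumber_middlePath_eq (by omega)]
  constructor
  · ring_nf
  · rw [show (2 * k + 1) ^ 2 = 4 * k * (k + 1) + 1 by ring, Nat.add_sub_cancel]
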